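/- The polynomial P(X) = (X^3 + X)^3 + X in ℂ[X] has exactly 9 distinct complex roots; equivalently, P is squarefree. In particular, there are exactly 8 distinct nonzero complex numbers c with (c^3 + c)^3 + c = 0. -/
import Mathlib
open Polynomial

lemma hPeq : ((X:ℂ[X])^3+X)^3+X = X^9+3*X^7+3*X^5+X^3+X := by ring

lemma hderiv : derivative (((X:ℂ[X])^3+X)^3+X)
    = 9*X^8+21*X^6+15*X^4+3*X^2+1 := by
  rw [hPeq]
  simp [derivative_pow, map_ofNat]
  ring

lemma hsep : Separable (((X:ℂ[X])^3+X)^3+X) := by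
  rw [Polynomial.Separable]
  set a : ℂ[X] := -1980*X - 8325*X^3 - 10827*X^5 - 4455*X^7 with ha
  set b : ℂ[X] := 458 + 606*X^2 + 1617*X^4 + 1533*X^6 + 495*X^8 with hb
  have key : a * (((X:ℂ[X])^3+X)^3+X) + b * derivative (((X:ℂ[X])^3+X)^3+X) = 458 := by
    rw [hderiv, ha, hb]; ring
  refine ⟨C (458:ℂ)⁻¹ * a, C (458:ℂ)⁻¹ * b, ?_⟩
  have : C (458:ℂ)⁻¹ * a * (((X:ℂ[X])^3+X)^3+X) + C (458:ℂ)⁻¹ * b * derivative (((X:ℂ[X])^3+X)^3+X)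
      = C (458:ℂ)⁻¹ * (a * (((X:ℂ[X])^3+X)^3+X) + b * derivative (((X:ℂ[X])^3+X)^3+X)) := by ring
  rw [this, key]
  rw [show (458:ℂ[X]) = C (458:ℂ) from (map_ofNat C 458).symm, ← C_mul]
  norm_num

lemma hdeg : (((X:ℂ[X])^3+X)^3+X).natDegree = 9 := by
  rw [hPeq]; compute_degree!

lemma hPne : (((X:ℂ[X])^3+X)^3+X) ≠ 0 := by
  intro h
  have := hdeg
  rw [h] at this
  simp at this

/-- The polynomial `P(X) = (X^3 + X)^3 + X` over `ℂ` has exactly 9 distinct roots,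
is squarefree, and has exactly 8 distinct nonzero roots. -/
theorem cubic_rabbit_parameter_poly_nine_roots :
    ((((X : ℂ[X]) ^ 3 + X) ^ 3 + X).roots.toFinset.card = 9) ∧
    Squarefree (((X : ℂ[X]) ^ 3 + X) ^ 3 + X) ∧
    Set.ncard {c : ℂ | c ≠ 0 ∧ (c ^ 3 + c) ^ 3 + c = 0} = 8 := by
  have hnodup : (((X:ℂ[X])^3+X)^3+X).roots.Nodup := nodup_roots hsep
  have hcard : (((X:ℂ[X])^3+X)^3+X).roots.card = 9 := by
    rw [← hdeg]
    exact (splits_iff_card_roots.mp (IsAlgClosed.splits _))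
  have h1 : ((((X:ℂ[X])^3+X)^3+X).roots.toFinset.card = 9) := by
    rw [Multiset.toFinset_card_of_nodup hnodup, hcard]
  refine ⟨h1, hsep.squarefree, ?_⟩
  have hzero : (0:ℂ) ∈ (((X:ℂ[X])^3+X)^3+X).roots.toFinset := by
    rw [Multiset.mem_toFinset, mem_roots hPne]
    simp [IsRoot]
  have hset : {c : ℂ | c ≠ 0 ∧ (c ^ 3 + c) ^ 3 + c = 0}
      = ↑((((X:ℂ[X])^3+X)^3+X).roots.toFinset.erase 0) := by
    ext c
    simp only [Set.mem_setOf_eq, Finset.coe_erase, Set.mem_diff, Multiset.mem_toFinset,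
      mem_roots hPne, IsRoot, Set.mem_singleton_iff]
    simp [eval_pow, and_comm, hPne]
  rw [hset, Set.ncard_coe_finset, Finset.card_erase_of_mem hzero, h1]
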